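/- Let H be a history satisfying uniqueness of written values, containing a transaction WOT whose write events are exactly w(X)x and w(Y)y for two distinct objects X and Y. Suppose the local history of a client C_r contains a transaction ROT with read events r(X)a and r(Y)b, and strictly later a transaction ROT2 with read events r(X)x and r(Y)y. Then for every transactional causal serialization for C_r of H, a = x if and only if b = y; that is, the read-only transaction ROT returns the value x written by the write-only transaction WOT if and only if it returns the value y written by WOT. -/

import Mathlib

/-!
Combinatorial model of transactional histories.
-/

/-- A transaction: a finite set of read events `(x, v)` (read of object `x`
returning value `v`) and a finite set of write events `(x, v)` (write of
value `v` to object `x`). -/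
structure Tx (Obj : Type*) (Val : Type*) where
  reads : Set (Obj × Val)
  writes : Set (Obj × Val)
  reads_finite : reads.Finite
  writes_finite : writes.Finite

/-- A history: a set of clients, each with a finite sequence (list) of
transactions — its local history. -/
structure History (Client : Type*) (Obj : Type*) (Val : Type*) where
  locals : Client → List (Tx Obj Val)

variable {Client Obj Val : Type*}

/-- `T` is a transaction of the history `H`. -/
def TxIn (H : History Client Obj Val) (T : Tx Obj Val) : Prop :=
  ∃ c : Client, T ∈ H.locals c

/-- `S` occurs strictly before `T` in the local history of client `c`. -/
def LocBefore (H : History Client Obj Val) (c : Client) (S T : Tx Obj Val) : Prop :=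
  ∃ i j : ℕ, i < j ∧ (H.locals c)[i]? = some S ∧ (H.locals c)[j]? = some T

/-- `T` contains a write event on object `x`. -/
def WritesOn (T : Tx Obj Val) (x : Obj) : Prop :=
  ∃ v : Val, (x, v) ∈ T.writes

/-- Uniqueness of written values: every value written by a write event of the
history is distinct from `bot` and from the value written by every other
write event in the history. -/
def UniqueWrites (H : History Client Obj Val) (bot : Val) : Prop :=
  (∀ T, TxIn H T → ∀ x v, (x, v) ∈ T.writes → v ≠ bot) ∧
  (∀ T T', TxIn H T → TxIn H T' → ∀ x x' v,
      (x, v) ∈ T.writes → (x', v) ∈ T'.writes → T = T' ∧ x = x')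

/-- The causality relation of a history: the smallest transitive relation such
that `S` causally precedes `T` whenever (i) `S` occurs strictly before `T` in
some client's local history, or (ii) `S` contains a write event `w(x)v` and
`T` contains the read event `r(x)v`. -/
inductive Causal (H : History Client Obj Val) : Tx Obj Val → Tx Obj Val → Prop
  | prog {S T : Tx Obj Val} (c : Client) : LocBefore H c S T → Causal H S T
  | readFrom {S T : Tx Obj Val} {x : Obj} {v : Val} :
      TxIn H S → TxIn H T → (x, v) ∈ S.writes → (x, v) ∈ T.reads → Causal H S T
  | trans {S T U : Tx Obj Val} : Causal H S T → Causal H T U → Causal H S U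

/-- The set of transactions over which a serialization for client `C` ranges:
all transactions of the history containing at least one write event, together
with all transactions of `C`'s local history. -/
def Dom (H : History Client Obj Val) (C : Client) : Set (Tx Obj Val) :=
  {T | (TxIn H T ∧ T.writes.Nonempty) ∨ T ∈ H.locals C}

/-- `lt` is a transactional causal serialization for client `C` of history `H`:
a strict linear order on `Dom H C` such that
(1) for every read event `r(x)v` with `v ≠ bot` in a transaction `T` of the
set, some transaction strictly preceding `T` contains a write event on `x`,
and the last such transaction contains the write event `w(x)v`;
(2) for every read event `r(x)bot` in a transaction `T` of the set, no
transaction strictly preceding `T` contains a write event on `x`;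
(3) whenever a transaction `S` of the set causally precedes a transaction `T`
of the set, `S` strictly precedes `T`. -/
structure IsCausalSerialization (H : History Client Obj Val) (bot : Val)
    (C : Client) (lt : Tx Obj Val → Tx Obj Val → Prop) : Prop where
  irrefl : ∀ T ∈ Dom H C, ¬ lt T T
  trans : ∀ S ∈ Dom H C, ∀ T ∈ Dom H C, ∀ U ∈ Dom H C, lt S T → lt T U → lt S U
  total : ∀ S ∈ Dom H C, ∀ T ∈ Dom H C, S ≠ T → lt S T ∨ lt T S
  read_val : ∀ T ∈ Dom H C, ∀ x v, (x, v) ∈ T.reads → v ≠ bot →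
      ∃ W ∈ Dom H C, lt W T ∧ (x, v) ∈ W.writes ∧
        ∀ W' ∈ Dom H C, lt W' T → WritesOn W' x → W' = W ∨ lt W' W
  read_bot : ∀ T ∈ Dom H C, ∀ x, (x, bot) ∈ T.reads →
      ∀ W ∈ Dom H C, lt W T → ¬ WritesOn W x
  causal_lt : ∀ S ∈ Dom H C, ∀ T ∈ Dom H C, Causal H S T → lt S T

/-!
In the serialization, `ROT` precedes `ROT2`, and since `ROT2` reads `x` and `y`, `WOT` is the
last writer on `X` and on `Y` before `ROT2`. So `ROT` reads `X` from `WOT` exactly when `WOT`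
precedes `ROT`: a writer on `X` strictly between `WOT` and `ROT` would also lie between `WOT`
and `ROT2`. The same holds for `Y`, so both readings are equivalent to `WOT` preceding `ROT`.
-/

theorem txIn_of_mem_dom {H : History Client Obj Val} {C : Client} {T : Tx Obj Val}
    (hT : T ∈ Dom H C) : TxIn H T :=
  hT.elim And.left fun h => ⟨C, h⟩

theorem mem_dom_of_writes {H : History Client Obj Val} {C : Client} {W : Tx Obj Val}
    {x : Obj} {v : Val} (hW : TxIn H W) (hv : (x, v) ∈ W.writes) : W ∈ Dom H C :=
  Or.inl ⟨hW, ⟨_, hv⟩⟩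

namespace LocBefore

variable {H : History Client Obj Val} {C : Client} {S T : Tx Obj Val}

theorem left_mem (h : LocBefore H C S T) : S ∈ H.locals C := by
  obtain ⟨i, _, _, hi, _⟩ := h
  exact List.mem_of_getElem? hi

theorem right_mem (h : LocBefore H C S T) : T ∈ H.locals C := by
  obtain ⟨_, j, _, _, hj⟩ := h
  exact List.mem_of_getElem? hj

end LocBefore

namespace IsCausalSerialization

variable {H : History Client Obj Val} {bot : Val} {C : Client}
  {lt : Tx Obj Val → Tx Obj Val → Prop}

theorem asymm (hser : IsCausalSerialization H bot C lt) {S T : Tx Obj Val}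
    (hS : S ∈ Dom H C) (hT : T ∈ Dom H C) (hST : lt S T) : ¬ lt T S :=
  fun hTS => hser.irrefl S hS (hser.trans S hS T hT S hS hST hTS)

theorem lt_of_locBefore (hser : IsCausalSerialization H bot C lt) {S T : Tx Obj Val}
    (h : LocBefore H C S T) : lt S T :=
  hser.causal_lt S (Or.inr h.left_mem) T (Or.inr h.right_mem) (.prog C h)

theorem lt_of_readFrom (hser : IsCausalSerialization H bot C lt) {W T : Tx Obj Val}
    {x : Obj} {v : Val} (hW : TxIn H W) (hT : T ∈ Dom H C)
    (hWv : (x, v) ∈ W.writes) (hTv : (x, v) ∈ T.reads) : lt W T :=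
  hser.causal_lt W (mem_dom_of_writes hW hWv) T hT (.readFrom hW (txIn_of_mem_dom hT) hWv hTv)

theorem lastWriter_of_readFrom (hser : IsCausalSerialization H bot C lt)
    (hU : UniqueWrites H bot) {W T : Tx Obj Val} {x : Obj} {v : Val} (hW : TxIn H W)
    (hT : T ∈ Dom H C) (hWv : (x, v) ∈ W.writes) (hTv : (x, v) ∈ T.reads) :
    ∀ W' ∈ Dom H C, lt W' T → WritesOn W' x → W' = W ∨ lt W' W := by
  obtain ⟨W₀, hW₀, -, hW₀v, hlast⟩ := hser.read_val T hT x v hTv (hU.1 W hW x v hWv)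
  obtain rfl : W₀ = W := (hU.2 W₀ W (txIn_of_mem_dom hW₀) hW x x v hW₀v hWv).1
  exact hlast

theorem writes_of_reads_of_lt (hser : IsCausalSerialization H bot C lt)
    (hU : UniqueWrites H bot) {S T W : Tx Obj Val} {x : Obj} {u v : Val}
    (hS : S ∈ Dom H C) (hT : T ∈ Dom H C) (hW : TxIn H W) (hST : lt S T) (hWS : lt W S)
    (hWv : (x, v) ∈ W.writes) (hTv : (x, v) ∈ T.reads) (hSu : (x, u) ∈ S.reads) :
    (x, u) ∈ W.writes := by
  have hWD : W ∈ Dom H C := mem_dom_of_writes hW hWv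
  have hu : u ≠ bot := by
    rintro rfl
    exact hser.read_bot S hS x hSu W hWD hWS ⟨v, hWv⟩
  obtain ⟨W₁, hW₁, hW₁S, hW₁u, hlastS⟩ := hser.read_val S hS x u hSu hu
  rcases hlastS W hWD hWS ⟨v, hWv⟩ with rfl | hWW₁
  · exact hW₁u
  · have hW₁T : lt W₁ T := hser.trans W₁ hW₁ S hS T hT hW₁S hST
    rcases hser.lastWriter_of_readFrom hU hW hT hWv hTv W₁ hW₁ hW₁T ⟨u, hW₁u⟩ with rfl | hW₁W
    · exact absurd hWW₁ (hser.irrefl W₁ hW₁)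
    · exact absurd hW₁W (hser.asymm hWD hW₁ hWW₁)

theorem reads_eq_iff_lt (hser : IsCausalSerialization H bot C lt) (hU : UniqueWrites H bot)
    {S T W : Tx Obj Val} {x : Obj} {u v : Val} (hS : S ∈ Dom H C) (hT : T ∈ Dom H C)
    (hW : TxIn H W) (hST : lt S T) (hWv : (x, v) ∈ W.writes)
    (hW_only : ∀ w, (x, w) ∈ W.writes → w = v) (hTv : (x, v) ∈ T.reads)
    (hSu : (x, u) ∈ S.reads) : u = v ↔ lt W S := by
  constructor
  · rintro rfl
    exact hser.lt_of_readFrom hW hS hWv hSu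
  · intro hWS
    exact hW_only u (hser.writes_of_reads_of_lt hU hS hT hW hST hWS hWv hTv hSu)

end IsCausalSerialization

/-- a read-only transaction `ROT` returns the value `x` written
by the write-only transaction `WOT` if and only if it returns the value `y`
written by `WOT`. -/
theorem stmt_0 {Client Obj Val : Type*} (bot : Val)
    (H : History Client Obj Val) (hU : UniqueWrites H bot)
    (WOT : Tx Obj Val) (hWOT : TxIn H WOT)
    (X Y : Obj) (x y : Val) (hXY : X ≠ Y)
    (hw : WOT.writes = {(X, x), (Y, y)})
    (Cr : Client) (ROT ROT2 : Tx Obj Val)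
    (hord : LocBefore H Cr ROT ROT2)
    (a b : Val)
    (hra : (X, a) ∈ ROT.reads) (hrb : (Y, b) ∈ ROT.reads)
    (hr2x : (X, x) ∈ ROT2.reads) (hr2y : (Y, y) ∈ ROT2.reads)
    (lt : Tx Obj Val → Tx Obj Val → Prop)
    (hser : IsCausalSerialization H bot Cr lt) :
    a = x ↔ b = y := by
  have hROT : ROT ∈ Dom H Cr := Or.inr hord.left_mem
  have hROT2 : ROT2 ∈ Dom H Cr := Or.inr hord.right_mem
  have hlt := hser.lt_of_locBefore hord
  have hX_only : ∀ w, (X, w) ∈ WOT.writes → w = x := by simp [hw, hXY]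
  have hY_only : ∀ w, (Y, w) ∈ WOT.writes → w = y := by simp [hw, hXY.symm]
  have hX := hser.reads_eq_iff_lt hU hROT hROT2 hWOT hlt (by simp [hw]) hX_only hr2x hra
  have hY := hser.reads_eq_iff_lt hU hROT hROT2 hWOT hlt (by simp [hw]) hY_only hr2y hrb
  rw [hX, hY]
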